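/- If n₀ ≥ 1 and the (j,j)-entry of C(z,w)^{n₀} has strictly smaller modulus than the (j,j)-entry of C(|z|,|w|)^{n₀} for some j, while all other entries satisfy |[C(z,w)^{n₀}]_{kl}| ≤ [C(|z|,|w|)^{n₀}]_{kl}, and C(|z|,|w|) is irreducible, then spr(C(z,w)) < spr(C(|z|,|w|)). -/

import Mathlib

/-!
Let `μ` be an eigenvalue of `M = C(z,w)` of maximal modulus, `x` an eigenvector, `u = |x|`,
`B = C(|z|,|w|)` and `r = spr B`. Entrywise domination gives `|μ| u ≤ B u`. If `r ≤ |μ|`, then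
`r u ≤ B u`, and subinvariance for irreducible nonnegative matrices forces `B u = r u` with
`u > 0`. Comparing `j`-th coordinates of `M^{n₀} x = μ^{n₀} x` and `B^{n₀} u = r^{n₀} u` then
gives `|μ|^{n₀} u_j < r^{n₀} u_j`, a contradiction.

Subinvariance: were `B u ≠ r u`, then `w = P u` with `P = Σ_{t<N} B^t` would satisfy
`B w ≥ (r + ε) w`. This contradicts the Collatz–Wielandt bound `c w ≤ B w → c ≤ r`, which follows
from `c^m w ≤ B^m w` and the growth bound `(B^m)_{kl} = O(r^m)`; the latter comes from
irreducibility and `tr B^m ≤ |S| r^m`.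
-/

open Matrix

/-- The spectral radius of a complex square matrix: the maximum modulus of its
eigenvalues (elements of its spectrum). -/
noncomputable def spr {n : Type*} [Fintype n] [DecidableEq n] (A : Matrix n n ℂ) : ℝ :=
  sSup ((‖·‖) '' spectrum ℂ A)

/-- `C(z, w) = Σ_{i,j ∈ {−1,0,1}} A_{i,j} z^i w^j` for complex `z, w`. -/
noncomputable def Cc {S : Type*} [Fintype S] (A : ℤ → ℤ → Matrix S S ℝ) (z w : ℂ) :
    Matrix S S ℂ :=
  ∑ i ∈ Finset.Icc (-1 : ℤ) 1, ∑ j ∈ Finset.Icc (-1 : ℤ) 1,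
    (z ^ i * w ^ j) • (A i j).map Complex.ofReal

/-- `C(x, y) = Σ_{i,j ∈ {−1,0,1}} A_{i,j} x^i y^j` for real `x, y`. -/
noncomputable def Cr {S : Type*} [Fintype S] (A : ℤ → ℤ → Matrix S S ℝ) (x y : ℝ) :
    Matrix S S ℝ :=
  ∑ i ∈ Finset.Icc (-1 : ℤ) 1, ∑ j ∈ Finset.Icc (-1 : ℤ) 1, (x ^ i * y ^ j) • A i j

open Filter Topology

section Spectrum

variable {n : Type*} [Fintype n] [DecidableEq n]

lemma spr_nonneg (Q : Matrix n n ℂ) : 0 ≤ spr Q :=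
  Real.sSup_nonneg fun _ ⟨_, _, h⟩ => h ▸ norm_nonneg _

lemma norm_le_spr {Q : Matrix n n ℂ} {μ : ℂ} (hμ : μ ∈ spectrum ℂ Q) : ‖μ‖ ≤ spr Q :=
  le_csSup ((Matrix.finite_spectrum Q).image _).bddAbove ⟨μ, hμ, rfl⟩

lemma exists_norm_eq_spr [Nonempty n] (Q : Matrix n n ℂ) : ∃ μ ∈ spectrum ℂ Q, ‖μ‖ = spr Q :=
  ((spectrum.nonempty_of_isAlgClosed_of_finiteDimensional ℂ Q).image _).csSup_mem
    ((Matrix.finite_spectrum Q).image _)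

lemma exists_mulVec_eq_smul_of_mem_spectrum {Q : Matrix n n ℂ} {μ : ℂ}
    (hμ : μ ∈ spectrum ℂ Q) : ∃ x ≠ 0, Q *ᵥ x = μ • x := by
  rw [← Matrix.spectrum_toLin', ← Module.End.hasEigenvalue_iff_mem_spectrum] at hμ
  obtain ⟨x, hx⟩ := hμ.exists_hasEigenvector
  exact ⟨x, hx.2, by simpa using hx.apply_eq_smul⟩

lemma norm_trace_pow_le [Nonempty n] (Q : Matrix n n ℂ) (m : ℕ) :
    ‖(Q ^ m).trace‖ ≤ Fintype.card n * spr Q ^ m := by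
  have hroots : ∀ μ ∈ (Q ^ m).charpoly.roots, ‖μ‖ ≤ spr Q ^ m := by
    intro μ hμ
    have hspec : μ ∈ spectrum ℂ (Q ^ m) := Matrix.mem_spectrum_iff_isRoot_charpoly.2
      (Polynomial.isRoot_of_mem_roots hμ)
    rw [spectrum.map_pow_of_nonempty
      (spectrum.nonempty_of_isAlgClosed_of_finiteDimensional ℂ Q)] at hspec
    obtain ⟨ν, hν, rfl⟩ := hspec
    rw [norm_pow]
    exact pow_le_pow_left₀ (norm_nonneg ν) (norm_le_spr hν) m
  calc ‖(Q ^ m).trace‖ = ‖(Q ^ m).charpoly.roots.sum‖ := by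
        rw [Matrix.trace_eq_sum_roots_charpoly]
    _ ≤ ((Q ^ m).charpoly.roots.map (‖·‖)).sum := norm_multiset_sum_le _
    _ ≤ (Q ^ m).charpoly.roots.card • spr Q ^ m := by
        simpa using Multiset.sum_le_card_nsmul ((Q ^ m).charpoly.roots.map (‖·‖)) _
          (Multiset.forall_mem_map_iff.2 hroots)
    _ ≤ Fintype.card n * spr Q ^ m := by
        rw [nsmul_eq_mul]
        gcongr
        · exact pow_nonneg (spr_nonneg Q) m
        · exact_mod_cast (Polynomial.card_roots' _).trans (Matrix.charpoly_natDegree_eq_dim _).le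

lemma trace_pow_le_of_nonneg [Nonempty n] {B : Matrix n n ℝ} (hB : ∀ i j, 0 ≤ B i j) (m : ℕ) :
    (B ^ m).trace ≤ Fintype.card n * spr (B.map Complex.ofReal) ^ m := by
  have : ((B ^ m).trace : ℂ) = ((B.map Complex.ofReal) ^ m).trace := by
    rw [show B.map Complex.ofReal = B.map Complex.ofRealHom from rfl, ← Matrix.map_pow]
    simp [Matrix.trace]
  calc (B ^ m).trace = ‖((B ^ m).trace : ℂ)‖ := by
        rw [Complex.norm_real, Real.norm_of_nonneg]
        exact Finset.sum_nonneg fun i _ => pow_apply_nonneg hB m i i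
    _ ≤ _ := this ▸ norm_trace_pow_le _ m

end Spectrum

lemma le_of_forall_pow_le_mul_pow {c r K : ℝ} (hr : 0 ≤ r) (h : ∀ m : ℕ, c ^ m ≤ K * r ^ m) :
    c ≤ r := by
  by_contra! hrc
  have hc : 0 < c := hr.trans_lt hrc
  have hlim : Tendsto (fun m : ℕ => K * (r / c) ^ m) atTop (𝓝 0) := by
    simpa using (tendsto_pow_atTop_nhds_zero_of_lt_one (div_nonneg hr hc.le)
      ((div_lt_one hc).2 hrc)).const_mul K
  obtain ⟨m, hm⟩ := (hlim.eventually_lt_const one_pos).exists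
  have hcm : 0 < c ^ m := pow_pos hc m
  rw [div_pow, ← mul_div_assoc, div_lt_one hcm] at hm
  linarith [h m]

lemma exists_pos_smul_le {ι : Type*} [Finite ι] {v : ι → ℝ} (hv : ∀ i, 0 < v i) (w : ι → ℝ) :
    ∃ ε : ℝ, 0 < ε ∧ ε • w ≤ v := by
  have hsmall : ∀ᶠ ε in 𝓝 (0 : ℝ), ∀ i, ε * w i < v i :=
    eventually_all.2 fun i => (continuous_id.mul continuous_const).continuousAt.eventually_lt
      continuousAt_const (by simpa using hv i)
  obtain ⟨ε, hε, hεpos⟩ := ((hsmall.filter_mono (nhdsWithin_le_nhds (s := Set.Ioi 0))).and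
    self_mem_nhdsWithin).exists
  exact ⟨ε, hεpos, fun i => (hε i).le⟩

namespace Matrix

lemma pow_mulVec_eq_smul {n R : Type*} [Fintype n] [DecidableEq n] [CommSemiring R]
    {Q : Matrix n n R} {c : R} {v : n → R} (h : Q *ᵥ v = c • v) (m : ℕ) :
    (Q ^ m) *ᵥ v = c ^ m • v := by
  induction m with
  | zero => simp
  | succ m ih => rw [pow_succ', ← mulVec_mulVec, ih, mulVec_smul, h, smul_smul, ← pow_succ]

variable {n : Type*} [Fintype n] {B : Matrix n n ℝ}

lemma mulVec_le_mulVec_of_nonneg (hB : ∀ i j, 0 ≤ B i j) {u v : n → ℝ} (h : u ≤ v) :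
    B *ᵥ u ≤ B *ᵥ v := fun k =>
  Finset.sum_le_sum fun i _ => mul_le_mul_of_nonneg_left (h i) (hB k i)

lemma mulVec_nonneg_of_nonneg (hB : ∀ i j, 0 ≤ B i j) {u : n → ℝ} (hu : 0 ≤ u) :
    0 ≤ B *ᵥ u := by
  simpa using mulVec_le_mulVec_of_nonneg hB hu

lemma apply_mul_le_mulVec (hB : ∀ i j, 0 ≤ B i j) {u : n → ℝ} (hu : 0 ≤ u) (k l : n) :
    B k l * u l ≤ (B *ᵥ u) k :=
  Finset.single_le_sum (fun i _ => mul_nonneg (hB k i) (hu i)) (Finset.mem_univ l)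

variable [DecidableEq n]

lemma pow_apply_mul_pow_apply_le (hB : ∀ i j, 0 ≤ B i j) (a b : ℕ) (i k j : n) :
    (B ^ a) i k * (B ^ b) k j ≤ (B ^ (a + b)) i j := by
  rw [pow_add, mul_apply]
  exact Finset.single_le_sum
    (fun l _ => mul_nonneg (pow_apply_nonneg hB a i l) (pow_apply_nonneg hB b l j))
    (Finset.mem_univ k)

lemma pow_smul_le_pow_mulVec (hB : ∀ i j, 0 ≤ B i j) {c : ℝ} (hc : 0 ≤ c) {w : n → ℝ}
    (h : c • w ≤ B *ᵥ w) (m : ℕ) : c ^ m • w ≤ (B ^ m) *ᵥ w := by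
  induction m with
  | zero => simp
  | succ m ih =>
    calc c ^ (m + 1) • w = c • (c ^ m • w) := by rw [smul_smul, pow_succ']
      _ ≤ c • ((B ^ m) *ᵥ w) := smul_le_smul_of_nonneg_left ih hc
      _ = (B ^ m) *ᵥ (c • w) := (mulVec_smul _ _ _).symm
      _ ≤ (B ^ m) *ᵥ (B *ᵥ w) := mulVec_le_mulVec_of_nonneg (pow_apply_nonneg hB m) h
      _ = (B ^ (m + 1)) *ᵥ w := by rw [mulVec_mulVec, pow_succ]

namespace IsIrreducible

lemma exists_pow_pos (hB : B.IsIrreducible) (i j : n) : ∃ k > 0, 0 < (B ^ k) i j :=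
  (isIrreducible_iff_exists_pow_pos hB.nonneg).1 hB i j

lemma exists_pow_apply_le (hB : B.IsIrreducible) (k l : n) :
    ∃ K, ∀ m, (B ^ m) k l ≤ K * spr (B.map Complex.ofReal) ^ m := by
  have : Nonempty n := ⟨k⟩
  obtain ⟨p, -, hp⟩ := hB.exists_pow_pos l k
  set r := spr (B.map Complex.ofReal)
  refine ⟨Fintype.card n * r ^ p / (B ^ p) l k, fun m => ?_⟩
  rw [div_mul_eq_mul_div, le_div_iff₀ hp]
  calc (B ^ m) k l * (B ^ p) l k ≤ (B ^ (m + p)) k k :=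
        pow_apply_mul_pow_apply_le hB.nonneg m p k l k
    _ ≤ (B ^ (m + p)).trace :=
        Finset.single_le_sum (fun i _ => pow_apply_nonneg hB.nonneg _ i i) (Finset.mem_univ k)
    _ ≤ Fintype.card n * r ^ (m + p) := trace_pow_le_of_nonneg hB.nonneg _
    _ = Fintype.card n * r ^ p * r ^ m := by ring

lemma le_spr_of_smul_le_mulVec (hB : B.IsIrreducible) {w : n → ℝ} (hw : 0 ≤ w) (hw0 : w ≠ 0)
    {c : ℝ} (h : c • w ≤ B *ᵥ w) : c ≤ spr (B.map Complex.ofReal) := by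
  set r := spr (B.map Complex.ofReal)
  rcases lt_or_ge c 0 with hc | hc
  · exact hc.le.trans (spr_nonneg _)
  obtain ⟨k, hk⟩ := (Pi.lt_def.1 (hw.lt_of_ne hw0.symm)).2
  choose K hK using hB.exists_pow_apply_le k
  refine le_of_forall_pow_le_mul_pow (spr_nonneg _) (K := (∑ l, K l * w l) / w k) fun m => ?_
  rw [div_mul_eq_mul_div, le_div_iff₀ hk, Finset.sum_mul]
  calc c ^ m * w k ≤ ((B ^ m) *ᵥ w) k := pow_smul_le_pow_mulVec hB.nonneg hc h m k
    _ = ∑ l, (B ^ m) k l * w l := rfl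
    _ ≤ ∑ l, K l * w l * r ^ m := Finset.sum_le_sum fun l _ => by
        rw [mul_right_comm]; exact mul_le_mul_of_nonneg_right (hK l m) (hw l)

lemma exists_sum_pow_apply_pos (hB : B.IsIrreducible) (j : n) :
    ∃ N, ∀ k, 0 < (∑ t ∈ Finset.range N, B ^ t) k j := by
  choose p _ hp using fun k => hB.exists_pow_pos k j
  refine ⟨Finset.univ.sup p + 1, fun k => ?_⟩
  rw [sum_apply]
  exact (hp k).trans_le <| Finset.single_le_sum (f := fun t => (B ^ t) k j)
    (fun t _ => pow_apply_nonneg hB.nonneg t k j)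
    (Finset.mem_range_succ_iff.2 (Finset.le_sup (Finset.mem_univ k)))

lemma mulVec_eq_spr_smul_of_le (hB : B.IsIrreducible) {u : n → ℝ} (hu : 0 ≤ u)
    (h : spr (B.map Complex.ofReal) • u ≤ B *ᵥ u) :
    B *ᵥ u = spr (B.map Complex.ofReal) • u := by
  set r := spr (B.map Complex.ofReal)
  set d := B *ᵥ u - r • u
  have hd : 0 ≤ d := sub_nonneg.2 h
  by_contra hne
  obtain ⟨j, hj⟩ := (Pi.lt_def.1 (hd.lt_of_ne (sub_ne_zero.2 hne).symm)).2
  obtain ⟨N, hN⟩ := hB.exists_sum_pow_apply_pos j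
  set P := ∑ t ∈ Finset.range N, B ^ t
  have hP : ∀ i k, 0 ≤ P i k := fun i k => by
    simp only [P, sum_apply]; exact Finset.sum_nonneg fun t _ => pow_apply_nonneg hB.nonneg t i k
  have hPd : ∀ k, 0 < (P *ᵥ d) k := fun k =>
    (mul_pos (hN k) hj).trans_le (apply_mul_le_mulVec hP hd k j)
  set w := P *ᵥ u
  have hBw : B *ᵥ w - r • w = P *ᵥ d := by
    have hcomm : Commute B P := Commute.sum_right _ _ _ fun t _ => (Commute.refl B).pow_right t
    rw [mulVec_sub, mulVec_smul, mulVec_mulVec, hcomm.eq, ← mulVec_mulVec, mulVec_mulVec]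
  have hw0 : w ≠ 0 := fun hw => by
    simpa [hw] using (hPd j).trans_eq (congr_fun hBw j).symm
  obtain ⟨ε, hε, hεw⟩ := exists_pos_smul_le hPd w
  have : r + ε ≤ r := hB.le_spr_of_smul_le_mulVec (mulVec_nonneg_of_nonneg hP hu) hw0 <| by
    rw [add_smul]; exact le_sub_iff_add_le'.1 (hBw ▸ hεw)
  linarith

lemma pos_of_mulVec_eq_smul (hB : B.IsIrreducible) {u : n → ℝ} (hu : 0 ≤ u) (hu0 : u ≠ 0)
    {r : ℝ} (hr : 0 ≤ r) (h : B *ᵥ u = r • u) (l : n) : 0 < u l := by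
  obtain ⟨k, hk⟩ := (Pi.lt_def.1 (hu.lt_of_ne hu0.symm)).2
  obtain ⟨p, -, hp⟩ := hB.exists_pow_pos l k
  have : 0 < r ^ p * u l := by
    simpa [pow_mulVec_eq_smul h p] using
      (mul_pos hp hk).trans_le (apply_mul_le_mulVec (pow_apply_nonneg hB.nonneg p) hu l k)
  exact pos_of_mul_pos_right this (pow_nonneg hr p)

end IsIrreducible

end Matrix

section Domination

variable {n : Type*} [Fintype n] {Q : Matrix n n ℂ} {P : Matrix n n ℝ} {k : n}

lemma norm_mulVec_apply_le (hQP : ∀ l, ‖Q k l‖ ≤ P k l) (x : n → ℂ) :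
    ‖(Q *ᵥ x) k‖ ≤ (P *ᵥ fun l => ‖x l‖) k :=
  (norm_sum_le _ _).trans <| Finset.sum_le_sum fun l _ => by
    rw [norm_mul]; exact mul_le_mul_of_nonneg_right (hQP l) (norm_nonneg _)

lemma norm_mulVec_apply_lt (hQP : ∀ l, ‖Q k l‖ ≤ P k l) {j : n} (hj : ‖Q k j‖ < P k j)
    {x : n → ℂ} (hx : x j ≠ 0) :
    ‖(Q *ᵥ x) k‖ < (P *ᵥ fun l => ‖x l‖) k :=
  (norm_sum_le _ _).trans_lt <| Finset.sum_lt_sum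
    (fun l _ => by rw [norm_mul]; exact mul_le_mul_of_nonneg_right (hQP l) (norm_nonneg _))
    ⟨j, Finset.mem_univ j, by rw [norm_mul]; exact mul_lt_mul_of_pos_right hj (norm_pos_iff.2 hx)⟩

end Domination

section Laurent

variable {S : Type*} [Fintype S] {A : ℤ → ℤ → Matrix S S ℝ}

lemma Cr_apply_nonneg (hA : ∀ i j k l, 0 ≤ A i j k l) {x y : ℝ} (hx : 0 ≤ x) (hy : 0 ≤ y)
    (k l : S) : 0 ≤ Cr A x y k l := by
  simp only [Cr, Matrix.sum_apply, Matrix.smul_apply, smul_eq_mul]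
  exact Finset.sum_nonneg fun i _ => Finset.sum_nonneg fun j _ =>
    mul_nonneg (mul_nonneg (zpow_nonneg hx i) (zpow_nonneg hy j)) (hA i j k l)

lemma norm_Cc_apply_le (hA : ∀ i j k l, 0 ≤ A i j k l) (z w : ℂ) (k l : S) :
    ‖Cc A z w k l‖ ≤ Cr A ‖z‖ ‖w‖ k l := by
  simp only [Cc, Cr, Matrix.sum_apply, Matrix.smul_apply, Matrix.map_apply, smul_eq_mul]
  refine (norm_sum_le _ _).trans <| Finset.sum_le_sum fun i _ =>
    (norm_sum_le _ _).trans <| Finset.sum_le_sum fun j _ => ?_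
  rw [norm_mul, norm_mul, norm_zpow, norm_zpow, Complex.norm_real,
    Real.norm_of_nonneg (hA i j k l)]

end Laurent

theorem stmt9_general {S : Type*} [Fintype S] [DecidableEq S]
    (A : ℤ → ℤ → Matrix S S ℝ) (hnn : ∀ i j k l, 0 ≤ A i j k l)
    (z w : ℂ) (n₀ : ℕ)
    (hle : ∀ k l, ‖((Cc A z w) ^ n₀) k l‖ ≤
      ((Cr A (‖z‖) (‖w‖)) ^ n₀) k l)
    (hstrict : ∃ j, ‖((Cc A z w) ^ n₀) j j‖ <
      ((Cr A (‖z‖) (‖w‖)) ^ n₀) j j)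
    (hirr : ∀ k l, ∃ n : ℕ, 0 < n ∧ 0 < ((Cr A (‖z‖) (‖w‖)) ^ n) k l) :
    spr (Cc A z w) < spr ((Cr A (‖z‖) (‖w‖)).map Complex.ofReal) := by
  obtain ⟨j, hj⟩ := hstrict
  have : Nonempty S := ⟨j⟩
  set B := Cr A ‖z‖ ‖w‖
  set r := spr (B.map Complex.ofReal)
  have hB : B.IsIrreducible :=
    (isIrreducible_iff_exists_pow_pos (Cr_apply_nonneg hnn (norm_nonneg z) (norm_nonneg w))).2 hirr
  obtain ⟨μ, hμ, hμr⟩ := exists_norm_eq_spr (Cc A z w)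
  rw [← hμr]
  obtain ⟨x, hx0, hMx⟩ := exists_mulVec_eq_smul_of_mem_spectrum hμ
  set u : S → ℝ := fun l => ‖x l‖
  have hu : 0 ≤ u := fun l => norm_nonneg (x l)
  have hsub : ‖μ‖ • u ≤ B *ᵥ u := fun k => by
    simpa [hMx, u] using norm_mulVec_apply_le (norm_Cc_apply_le hnn z w k) x
  by_contra! hrμ
  have hBu : B *ᵥ u = r • u :=
    hB.mulVec_eq_spr_smul_of_le hu ((smul_le_smul_of_nonneg_right hrμ hu).trans hsub)
  have hu0 : u ≠ 0 := fun h => hx0 (funext fun l => norm_eq_zero.1 (congr_fun h l))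
  have hxj : x j ≠ 0 := norm_pos_iff.1 (hB.pos_of_mulVec_eq_smul hu hu0 (spr_nonneg _) hBu j)
  have hcoord := norm_mulVec_apply_lt (hle j) hj hxj
  rw [pow_mulVec_eq_smul hMx, pow_mulVec_eq_smul hBu] at hcoord
  simp only [Pi.smul_apply, smul_eq_mul, norm_mul, norm_pow] at hcoord
  exact hcoord.not_ge (mul_le_mul_of_nonneg_right (pow_le_pow_left₀ (spr_nonneg _) hrμ n₀) (hu j))

/-- If `n₀ ≥ 1`, every entry of `C(z,w)^{n₀}` is dominated in modulus by the corresponding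
entry of `C(|z|,|w|)^{n₀}`, the `(j,j)`-entry is strictly smaller in modulus for some `j`,
and `C(|z|,|w|)` is irreducible, then `spr(C(z,w)) < spr(C(|z|,|w|))`. -/
theorem stmt9 {S : Type*} [Fintype S] [DecidableEq S]
    (A : ℤ → ℤ → Matrix S S ℝ) (hnn : ∀ i j k l, 0 ≤ A i j k l)
    (z w : ℂ) (hz : z ≠ 0) (hw : w ≠ 0) (n₀ : ℕ) (hn₀ : 1 ≤ n₀)
    (hle : ∀ k l, ‖((Cc A z w) ^ n₀) k l‖ ≤
      ((Cr A (‖z‖) (‖w‖)) ^ n₀) k l)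
    (hstrict : ∃ j, ‖((Cc A z w) ^ n₀) j j‖ <
      ((Cr A (‖z‖) (‖w‖)) ^ n₀) j j)
    (hirr : ∀ k l, ∃ n : ℕ, 0 < n ∧ 0 < ((Cr A (‖z‖) (‖w‖)) ^ n) k l) :
    spr (Cc A z w) < spr ((Cr A (‖z‖) (‖w‖)).map Complex.ofReal) :=
  stmt9_general A hnn z w n₀ hle hstrict hirr
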